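/- Fix an integer n ≥ 1, ε ∈ ℝ, an open interval I ⊆ ℝ, a smooth function ψ : I → ℝ, and smooth maps J, R : I → (n×n real matrices) satisfying the Jacobi equation J'' + R·J = 0 on I. Set J_ψ := e^{−ψ/n}·J and R_{(0,ε)} := e^{(4(1−ε)/n)ψ}·(R + (1/n)(ψ'' + ψ'²/n)·Iₙ). Then the weighted Jacobi equation J_ψ** + (2ε/n)·ψ*·J_ψ* + R_{(0,ε)}·J_ψ = 0 holds on I. -/

import Mathlib

attribute [local instance] Matrix.normedAddCommGroup Matrix.normedSpace

/-- Derivative with respect to the `ε`-proper time `τ_ε` (a primitive of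
`e^{(2(ε−1)/n)ψ}`): `f* = e^{(2(1−ε)/n)ψ} · f'`, matrix-valued version. -/
noncomputable def mstar (n : ℕ) (ε : ℝ) (ψ : ℝ → ℝ)
    (f : ℝ → Matrix (Fin n) (Fin n) ℝ) : ℝ → Matrix (Fin n) (Fin n) ℝ :=
  fun t => Real.exp (2 * (1 - ε) / (n : ℝ) * ψ t) • deriv f t

/-- Derivative with respect to the `ε`-proper time, scalar version. -/
noncomputable def sstar (n : ℕ) (ε : ℝ) (ψ : ℝ → ℝ) (f : ℝ → ℝ) : ℝ → ℝ :=
  fun t => Real.exp (2 * (1 - ε) / (n : ℝ) * ψ t) * deriv f t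

/-- weighted Jacobi equation, Lemma 5.5. If `J'' + R·J = 0` on the
open interval `I`, `J_ψ = e^{−ψ/n}·J` and
`R_{(0,ε)} = e^{(4(1−ε)/n)ψ}·(R + (1/n)(ψ'' + ψ'²/n)·Iₙ)`, then
`J_ψ** + (2ε/n)·ψ*·J_ψ* + R_{(0,ε)}·J_ψ = 0` on `I`. -/
theorem weighted_jacobi_equation (n : ℕ) (hn : 1 ≤ n) (ε : ℝ)
    (I : Set ℝ) (hIopen : IsOpen I) (hIinterval : I.OrdConnected)
    (ψ : ℝ → ℝ) (J R : ℝ → Matrix (Fin n) (Fin n) ℝ)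
    (hψ : ContDiffOn ℝ (⊤ : ℕ∞) ψ I) (hJ : ContDiffOn ℝ (⊤ : ℕ∞) J I) (hR : ContDiffOn ℝ (⊤ : ℕ∞) R I)
    (hJacobi : ∀ t ∈ I, deriv (deriv J) t + R t * J t = 0)
    (Jψ : ℝ → Matrix (Fin n) (Fin n) ℝ)
    (hJψ : ∀ t, Jψ t = Real.exp (-ψ t / (n : ℝ)) • J t)
    (R0ε : ℝ → Matrix (Fin n) (Fin n) ℝ)
    (hR0ε : ∀ t, R0ε t = Real.exp (4 * (1 - ε) / (n : ℝ) * ψ t) •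
      (R t + ((1 / (n : ℝ)) * (deriv (deriv ψ) t + (deriv ψ t) ^ 2 / (n : ℝ))) •
        (1 : Matrix (Fin n) (Fin n) ℝ))) :
    ∀ t ∈ I,
      mstar n ε ψ (mstar n ε ψ Jψ) t
        + (2 * ε / (n : ℝ) * sstar n ε ψ ψ t) • mstar n ε ψ Jψ t
        + R0ε t * Jψ t = 0 := by
  intro t ht
  have hn0 : (n : ℝ) ≠ 0 := Nat.cast_ne_zero.mpr (by omega)
  have hmem : I ∈ nhds t := hIopen.mem_nhds ht
  have hψ' : ContDiffOn ℝ (⊤ : ℕ∞) (deriv ψ) I := hψ.deriv_of_isOpen hIopen (by simp)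
  have hJ' : ContDiffOn ℝ (⊤ : ℕ∞) (deriv J) I := hJ.deriv_of_isOpen hIopen (by simp)
  have Dψ : ∀ s ∈ I, HasDerivAt ψ (deriv ψ s) s := fun s hs =>
    ((hψ.differentiableOn (by simp)).differentiableAt (hIopen.mem_nhds hs)).hasDerivAt
  have Dψ' : ∀ s ∈ I, HasDerivAt (deriv ψ) (deriv (deriv ψ) s) s := fun s hs =>
    ((hψ'.differentiableOn (by simp)).differentiableAt (hIopen.mem_nhds hs)).hasDerivAt
  have DJ : ∀ s ∈ I, HasDerivAt J (deriv J s) s := fun s hs =>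
    ((hJ.differentiableOn (by simp)).differentiableAt (hIopen.mem_nhds hs)).hasDerivAt
  have DJ' : ∀ s ∈ I, HasDerivAt (deriv J) (deriv (deriv J) s) s := fun s hs =>
    ((hJ'.differentiableOn (by simp)).differentiableAt (hIopen.mem_nhds hs)).hasDerivAt
  -- inner exponent derivative
  have hin : ∀ s ∈ I, HasDerivAt (fun u => -ψ u / (n : ℝ)) (-(deriv ψ s) / (n : ℝ)) s :=
    fun s hs => ((Dψ s hs).neg).div_const _
  -- derivative of Jψ
  have hJψfun : Jψ = fun u => Real.exp (-ψ u / (n : ℝ)) • J u := funext hJψ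
  have hDJψ : ∀ s ∈ I, HasDerivAt Jψ
      (Real.exp (-ψ s / (n : ℝ)) • deriv J s
        + (Real.exp (-ψ s / (n : ℝ)) * (-(deriv ψ s) / (n : ℝ))) • J s) s := by
    intro s hs
    rw [hJψfun]
    exact ((hin s hs).exp).smul (DJ s hs)
  set G : ℝ → Matrix (Fin n) (Fin n) ℝ := fun s =>
    Real.exp (2 * (1 - ε) / (n : ℝ) * ψ s) •
      (Real.exp (-ψ s / (n : ℝ)) • deriv J s
        + (Real.exp (-ψ s / (n : ℝ)) * (-(deriv ψ s) / (n : ℝ))) • J s) with hG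
  have hEq : mstar n ε ψ Jψ =ᶠ[nhds t] G := by
    filter_upwards [hmem] with s hs
    simp only [mstar, hG]
    exact congrArg _ (hDJψ s hs).deriv
  -- derivative of G at t
  have hexpin : HasDerivAt (fun u => Real.exp (-ψ u / (n : ℝ)))
      (Real.exp (-ψ t / (n : ℝ)) * (-(deriv ψ t) / (n : ℝ))) t := (hin t ht).exp
  have hu : HasDerivAt (fun u => Real.exp (-ψ u / (n : ℝ)) * (-(deriv ψ u) / (n : ℝ)))
      ((Real.exp (-ψ t / (n : ℝ)) * (-(deriv ψ t) / (n : ℝ))) * (-(deriv ψ t) / (n : ℝ))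
        + Real.exp (-ψ t / (n : ℝ)) * (-(deriv (deriv ψ) t) / (n : ℝ))) t :=
    hexpin.mul (((Dψ' t ht).neg).div_const _)
  have hA := (hexpin.smul (DJ' t ht)).add (hu.smul (DJ t ht))
  have hout : HasDerivAt (fun u => 2 * (1 - ε) / (n : ℝ) * ψ u)
      (2 * (1 - ε) / (n : ℝ) * deriv ψ t) t := (Dψ t ht).const_mul _
  have hGd : HasDerivAt (fun s => Real.exp (2 * (1 - ε) / (n : ℝ) * ψ s) •
      (Real.exp (-ψ s / (n : ℝ)) • deriv J s
        + (Real.exp (-ψ s / (n : ℝ)) * (-(deriv ψ s) / (n : ℝ))) • J s)) _ t :=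
    (hout.exp).smul hA
  have hGd' : deriv (fun s => Real.exp (2 * (1 - ε) / (n : ℝ) * ψ s) •
      (Real.exp (-ψ s / (n : ℝ)) • deriv J s
        + (Real.exp (-ψ s / (n : ℝ)) * (-(deriv ψ s) / (n : ℝ))) • J s)) t = _ := hGd.deriv
  have hd1 : deriv (mstar n ε ψ Jψ) t = deriv G t := hEq.deriv_eq
  have hm1 : mstar n ε ψ Jψ t = G t := hEq.eq_of_nhds
  have hd0 : deriv Jψ t = Real.exp (-ψ t / (n : ℝ)) • deriv J t
      + (Real.exp (-ψ t / (n : ℝ)) * (-(deriv ψ t) / (n : ℝ))) • J t := (hDJψ t ht).deriv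
  have hJ2 : deriv (deriv J) t = -(R t * J t) := by
    have := hJacobi t ht
    linear_combination (norm := abel) this
  simp only [mstar, sstar, hd1, hm1, hGd', hR0ε, hJψ, hG, hJ2, hd0, Pi.add_apply,
    Pi.smul_apply]
  have hexp4 : Real.exp (4 * (1 - ε) / (n : ℝ) * ψ t)
      = Real.exp (2 * (1 - ε) / (n : ℝ) * ψ t) * Real.exp (2 * (1 - ε) / (n : ℝ) * ψ t) := by
    rw [← Real.exp_add]; ring_nf
  rw [hexp4]
  simp only [Matrix.smul_mul, Matrix.mul_smul, Matrix.add_mul, Matrix.one_mul]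
  match_scalars <;> field_simp <;> ring
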